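/- Let n ≥ 2 be an integer and let P(X) = ∏_{k=1}^n (X − (k−1/2)²)² be the real polynomial of degree 2n, with coefficients c_j (the coefficient of X^j in P). Then (−1)^j·c_j ≥ 0 for every 0 ≤ j ≤ 2n, and for every integer m with 2 ≤ m ≤ n one has −4·c_{2m−1} ≥ c_{2m}. (Equivalently, writing Π_n(x)² = Σ_{m=0}^{2n} (−1)^m a_m² x^{2m} with a_m² ≥ 0, one has 4·a_{2m−1}² ≥ a_{2m}² for 2 ≤ m ≤ n, where Π_n(x) = ∏_{k=1}^n (x² − (k−1/2)²).) -/

import Mathlib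

/-! With `Q(X) = ∏ (X + (k - 1/2)²)` we have `P(X) = Q(-X)²`, so `(-1)^j c_j` is the `j`-th
coefficient of `Q²`, which is nonnegative. Comparing `Q'` with `Q · ∑ 1 / (X + (k - 1/2)²)`
coefficientwise, the coefficients `q_j` of `Q` satisfy
`(j + 1) q_{j+1} ≤ (∑ (k - 1/2)⁻²) q_j ≤ 5 q_j`, hence `q_{j+1} ≤ 5/2 q_j` for `j ≥ 1`.
Lowering the larger index of each product `q_a q_b` in `c_{2m} = ∑_{a+b=2m} q_a q_b` by one
hits every term of `-c_{2m-1} = ∑_{a+b=2m-1} q_a q_b` once and `q_{m-1} q_m` (at most half of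
that sum) once more, which gives `c_{2m} ≤ 15/4 · (-c_{2m-1})`. -/

open Finset Polynomial

/-- `P(X) = ∏_{k=1}^n (X − (k−1/2)²)²`, so that `P(x²) = Π_n(x)²`. -/
noncomputable def PolyP (n : ℕ) : Polynomial ℝ :=
  ∏ k ∈ Finset.Icc 1 n, (Polynomial.X - Polynomial.C (((k : ℝ) - 1 / 2) ^ 2)) ^ 2

namespace Polynomial

theorem coeff_comp_neg_X {R : Type*} [CommRing R] (p : R[X]) (n : ℕ) :
    (p.comp (-X)).coeff n = (-1) ^ n * p.coeff n := by
  induction p using Polynomial.induction_on' with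
  | add p q hp hq => rw [add_comp, coeff_add, coeff_add, hp, hq, mul_add]
  | monomial k a =>
    rw [monomial_comp, neg_pow, ← C_1, ← C_neg, ← C_pow, ← mul_assoc, ← C_mul, coeff_C_mul,
      coeff_X_pow, coeff_monomial]
    split_ifs <;> simp_all [mul_comm]

section Nonneg

variable {R ι : Type*} [CommSemiring R] [PartialOrder R] [IsOrderedRing R]

theorem coeff_mul_nonneg {p q : R[X]} (hp : ∀ i, 0 ≤ p.coeff i) (hq : ∀ i, 0 ≤ q.coeff i)
    (n : ℕ) : 0 ≤ (p * q).coeff n := by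
  rw [coeff_mul]
  exact sum_nonneg fun x _ => mul_nonneg (hp _) (hq _)

theorem coeff_X_add_C_nonneg {a : R} (ha : 0 ≤ a) (n : ℕ) : 0 ≤ (X + C a).coeff n := by
  rcases n with _ | _ | n <;> simp [ha, coeff_X]

theorem coeff_prod_X_add_C_nonneg {s : Finset ι} {a : ι → R} (ha : ∀ i ∈ s, 0 ≤ a i) (n : ℕ) :
    0 ≤ (∏ i ∈ s, (X + C (a i))).coeff n := by
  refine prod_induction _ (fun p : R[X] => ∀ n, 0 ≤ p.coeff n) (fun _ _ => coeff_mul_nonneg)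
    (fun n => ?_) (fun i hi => coeff_X_add_C_nonneg (ha i hi)) n
  rw [coeff_one]
  split_ifs <;> simp

end Nonneg

section OrderedField

variable {K ι : Type*} [Field K] [LinearOrder K] [IsStrictOrderedRing K]

/-- The coefficientwise form of `T' / T = ∑ 1 / (X + a i)` for `T = ∏ (X + a i)`. -/
theorem succ_mul_coeff_prod_X_add_C_le {s : Finset ι} {a : ι → K} (ha : ∀ i ∈ s, 0 < a i)
    (n : ℕ) :
    (n + 1) * (∏ i ∈ s, (X + C (a i))).coeff (n + 1) ≤
      (∑ i ∈ s, (a i)⁻¹) * (∏ i ∈ s, (X + C (a i))).coeff n := by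
  classical
  have hfactor : ∀ i ∈ s, a i * (∏ j ∈ s.erase i, (X + C (a j))).coeff n ≤
      (∏ i ∈ s, (X + C (a i))).coeff n := by
    intro i hi
    rw [← mul_prod_erase s _ hi, add_mul, coeff_add, coeff_C_mul, le_add_iff_nonneg_left]
    exact coeff_mul_nonneg (by simpa using coeff_X_add_C_nonneg (le_refl (0 : K)))
      (coeff_prod_X_add_C_nonneg fun j hj => (ha j (mem_of_mem_erase hj)).le) n
  calc ((n : K) + 1) * (∏ i ∈ s, (X + C (a i))).coeff (n + 1)
        = ∑ i ∈ s, (∏ j ∈ s.erase i, (X + C (a j))).coeff n := by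
        rw [mul_comm, ← coeff_derivative, derivative_prod_finset, finsetSum_coeff]
        simp
    _ ≤ ∑ i ∈ s, (a i)⁻¹ * (∏ i ∈ s, (X + C (a i))).coeff n := by
        refine sum_le_sum fun i hi => ?_
        rw [le_inv_mul_iff₀ (ha i hi)]
        exact hfactor i hi
    _ = (∑ i ∈ s, (a i)⁻¹) * (∏ i ∈ s, (X + C (a i))).coeff n := (sum_mul ..).symm

theorem two_mul_sum_range_mul_le {t : ℕ → K} {r : K} (hr : 0 ≤ r) (ht : ∀ n, 0 ≤ t n)
    (hratio : ∀ n, 1 ≤ n → t (n + 1) ≤ r * t n) {m : ℕ} (hm : 2 ≤ m) :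
    2 * ∑ a ∈ range (2 * m + 1), t a * t (2 * m - a) ≤
      3 * r * ∑ a ∈ range (2 * m), t a * t (2 * m - 1 - a) := by
  set g : ℕ → K := fun a => t a * t (2 * m - 1 - a)
  have hlow : ∀ a < m, t a * t (2 * m - a) ≤ r * g a := fun a ha => by
    rw [show 2 * m - a = 2 * m - 1 - a + 1 by omega, mul_left_comm]
    exact mul_le_mul_of_nonneg_left (hratio _ (by omega)) (ht a)
  have hhigh : ∀ i ≤ m, t (m + i) * t (2 * m - (m + i)) ≤ r * g (m - 1 + i) := fun i hi => by
    simp only [g]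
    rw [show m + i = m - 1 + i + 1 by omega,
      show 2 * m - (m - 1 + i + 1) = 2 * m - 1 - (m - 1 + i) by omega, ← mul_assoc]
    exact mul_le_mul_of_nonneg_right (hratio _ (by omega)) (ht _)
  have heven : ∑ a ∈ range (2 * m + 1), t a * t (2 * m - a) ≤
      r * (∑ a ∈ range m, g a + ∑ i ∈ range (m + 1), g (m - 1 + i)) := by
    rw [show 2 * m + 1 = m + (m + 1) by omega, sum_range_add, mul_add, mul_sum, mul_sum]
    exact add_le_add (sum_le_sum fun a ha => hlow a (mem_range.1 ha))
      (sum_le_sum fun i hi => hhigh i (Nat.lt_succ_iff.1 (mem_range.1 hi)))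
  have hsplit : ∑ a ∈ range m, g a + ∑ i ∈ range (m + 1), g (m - 1 + i) =
      ∑ a ∈ range (2 * m), g a + g (m - 1) := by
    have hlast : ∑ a ∈ range m, g a = ∑ a ∈ range (m - 1), g a + g (m - 1) := by
      rw [← sum_range_succ, Nat.sub_add_cancel (by omega)]
    have hodd : ∑ a ∈ range (2 * m), g a =
        ∑ a ∈ range (m - 1), g a + ∑ i ∈ range (m + 1), g (m - 1 + i) := by
      rw [← sum_range_add, show m - 1 + (m + 1) = 2 * m by omega]
    rw [hlast, hodd]
    ring
  have hmid : 2 * g (m - 1) ≤ ∑ a ∈ range (2 * m), g a :=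
    calc 2 * g (m - 1) = ∑ a ∈ {m - 1, m}, g a := by
          rw [sum_pair (by omega), two_mul]
          simp only [g]
          rw [show 2 * m - 1 - (m - 1) = m by omega, show 2 * m - 1 - m = m - 1 by omega,
            mul_comm]
      _ ≤ ∑ a ∈ range (2 * m), g a :=
          sum_le_sum_of_subset_of_nonneg (by intro a; simp; omega)
            fun a _ _ => mul_nonneg (ht _) (ht _)
  rw [hsplit] at heven
  nlinarith

theorem two_mul_coeff_sq_le {p : K[X]} {r : K} (hr : 0 ≤ r) (hp : ∀ n, 0 ≤ p.coeff n)
    (hratio : ∀ n, 1 ≤ n → p.coeff (n + 1) ≤ r * p.coeff n) {m : ℕ} (hm : 2 ≤ m) :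
    2 * (p ^ 2).coeff (2 * m) ≤ 3 * r * (p ^ 2).coeff (2 * m - 1) := by
  have hsq : ∀ N, (p ^ 2).coeff N = ∑ a ∈ range (N + 1), p.coeff a * p.coeff (N - a) := by
    intro N
    rw [sq, coeff_mul, Nat.sum_antidiagonal_eq_sum_range_succ_mk]
  rw [hsq, hsq, Nat.sub_add_cancel (by omega)]
  exact two_mul_sum_range_mul_le hr hp hratio hm

end OrderedField

end Polynomial

theorem sum_Icc_inv_sq_sub_half_le_five (n : ℕ) :
    ∑ k ∈ Icc 1 n, (((k : ℝ) - 1 / 2) ^ 2)⁻¹ ≤ 5 := by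
  -- `(k - 1/2)² ≥ (k - 1) k`, which telescopes from `k = 2` on
  have htelescope : ∀ n : ℕ, 1 ≤ n →
      ∑ k ∈ Icc 1 n, (((k : ℝ) - 1 / 2) ^ 2)⁻¹ ≤ 5 - 1 / (n : ℝ) := by
    intro n hn
    induction n, hn using Nat.le_induction with
    | base => norm_num
    | succ n hn ih =>
      have hn' : (1 : ℝ) ≤ n := by exact_mod_cast hn
      have hstep : (((n : ℝ) + 1 - 1 / 2) ^ 2)⁻¹ ≤ 1 / (n : ℝ) - 1 / (n + 1) := by
        rw [div_sub_div _ _ (by positivity) (by positivity), one_mul, mul_one, add_sub_cancel_left,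
          inv_eq_one_div]
        exact one_div_le_one_div_of_le (by positivity) (by nlinarith)
      rw [sum_Icc_succ_top (by omega)]
      push_cast
      linarith
  rcases n.eq_zero_or_pos with rfl | hn
  · simp
  · linarith [htelescope n hn, one_div_nonneg.2 (n.cast_nonneg (α := ℝ))]

noncomputable def PolyQ (n : ℕ) : ℝ[X] :=
  ∏ k ∈ Icc 1 n, (X + C (((k : ℝ) - 1 / 2) ^ 2))

theorem PolyP_eq_comp_neg_X (n : ℕ) : PolyP n = (PolyQ n ^ 2).comp (-X) := by
  rw [PolyP, PolyQ, pow_comp, Polynomial.prod_comp, ← prod_pow]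
  refine prod_congr rfl fun k _ => ?_
  rw [add_comp, X_comp, C_comp]
  ring

theorem coeff_PolyQ_nonneg (n j : ℕ) : 0 ≤ (PolyQ n).coeff j :=
  coeff_prod_X_add_C_nonneg (fun _ _ => sq_nonneg _) j

theorem coeff_PolyQ_succ_le (n : ℕ) {j : ℕ} (hj : 1 ≤ j) :
    (PolyQ n).coeff (j + 1) ≤ 5 / 2 * (PolyQ n).coeff j := by
  have hpos : ∀ k ∈ Icc 1 n, 0 < ((k : ℝ) - 1 / 2) ^ 2 := fun k hk => by
    have : (1 : ℝ) ≤ k := by exact_mod_cast (mem_Icc.1 hk).1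
    exact pow_pos (by linarith) 2
  have hj' : (1 : ℝ) ≤ j := by exact_mod_cast hj
  have hnewton : ((j : ℝ) + 1) * (PolyQ n).coeff (j + 1) ≤
      (∑ k ∈ Icc 1 n, (((k : ℝ) - 1 / 2) ^ 2)⁻¹) * (PolyQ n).coeff j :=
    succ_mul_coeff_prod_X_add_C_le hpos j
  have hsum := mul_le_mul_of_nonneg_right (sum_Icc_inv_sq_sub_half_le_five n)
    (coeff_PolyQ_nonneg n j)
  nlinarith [coeff_PolyQ_nonneg n (j + 1)]

theorem stmt12_general (n : ℕ) :
    (∀ j ≤ 2 * n, 0 ≤ (-1 : ℝ) ^ j * (PolyP n).coeff j) ∧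
      ∀ m : ℕ, 2 ≤ m → m ≤ n →
        -4 * (PolyP n).coeff (2 * m - 1) ≥ (PolyP n).coeff (2 * m) := by
  have hcoeff : ∀ j, (PolyP n).coeff j = (-1) ^ j * (PolyQ n ^ 2).coeff j := fun j => by
    rw [PolyP_eq_comp_neg_X, coeff_comp_neg_X]
  have hsq : ∀ j, 0 ≤ (PolyQ n ^ 2).coeff j := by
    rw [sq]
    exact coeff_mul_nonneg (coeff_PolyQ_nonneg n) (coeff_PolyQ_nonneg n)
  refine ⟨fun j _ => ?_, fun m hm _ => ?_⟩
  · rw [hcoeff, ← mul_assoc, ← mul_pow, neg_one_mul, neg_neg, one_pow, one_mul]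
    exact hsq j
  · rw [hcoeff, hcoeff, (even_two_mul m).neg_one_pow, Odd.neg_one_pow ⟨m - 1, by omega⟩]
    have := two_mul_coeff_sq_le (by norm_num) (coeff_PolyQ_nonneg n)
      (fun j hj => coeff_PolyQ_succ_le n hj) hm
    linarith [hsq (2 * m - 1)]

theorem stmt12 (n : ℕ) (hn : 2 ≤ n) :
    (∀ j ≤ 2 * n, 0 ≤ (-1 : ℝ) ^ j * (PolyP n).coeff j) ∧
      ∀ m : ℕ, 2 ≤ m → m ≤ n →
        -4 * (PolyP n).coeff (2 * m - 1) ≥ (PolyP n).coeff (2 * m) :=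
  stmt12_general n
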